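/- arXiv:2506.07601 — 3 statements merged into one kernel-verified Lean document; each statement's English description precedes it below -/
import Mathlib

section
/- Let f : (0,∞) → ℝ be a strictly monotonic C^∞ function with nowhere-vanishing derivative, let g : [0,1] → ℝ be a symmetric distribution function, and let M be a mean satisfying f(M(x,y)) = ∫₀¹ f(t x + (1−t) y) g(t) dt for all x,y > 0 (the g-weighted integral mean of the first kind with integrality function f). Then the characteristic function of M satisfies Q_M(x) = c₁(g) · f''(x)/f'(x) for all x > 0, where c₁(g) := ∫₀¹ (t − 1/2)² g(t) dt. -/
open Real Set MeasureTheory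

/-- A (bivariate) mean: a C^infty function on (0,∞)² with values in (0,∞),
internal (between min and max) and symmetric. -/
def IsMean (M : ℝ → ℝ → ℝ) : Prop :=
  ContDiffOn ℝ (⊤ : ℕ∞) (fun p : ℝ × ℝ => M p.1 p.2) {p : ℝ × ℝ | 0 < p.1 ∧ 0 < p.2} ∧
  (∀ x y : ℝ, 0 < x → 0 < y → 0 < M x y) ∧
  (∀ x y : ℝ, 0 < x → 0 < y → min x y ≤ M x y ∧ M x y ≤ max x y) ∧
  (∀ x y : ℝ, 0 < x → 0 < y → M x y = M y x)

/-- The characteristic function of a mean: `Q_M(x) = ∂²M/∂x² (x,x)`. -/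
noncomputable def charFun (M : ℝ → ℝ → ℝ) (x : ℝ) : ℝ :=
  iteratedDeriv 2 (fun s => M s x) x
/-- A symmetric distribution function on [0,1]. -/
def IsSymmDist (g : ℝ → ℝ) : Prop :=
  (∀ᵐ t ∂(MeasureTheory.volume.restrict (Set.Icc (0:ℝ) 1)), 0 ≤ g t) ∧
  MeasureTheory.IntegrableOn g (Set.Icc (0:ℝ) 1) ∧
  (∫ t in (0:ℝ)..1, g t) = 1 ∧
  (∀ᵐ t ∂(MeasureTheory.volume.restrict (Set.Icc (0:ℝ) 1)), g t = g (1 - t))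


lemma aux_mul_int (g : ℝ → ℝ) (hgint : MeasureTheory.IntegrableOn g (Set.Icc (0:ℝ) 1))
    (φ : ℝ → ℝ) (hφ : ContinuousOn φ (Set.Icc (0:ℝ) 1)) :
    MeasureTheory.IntegrableOn (fun t => φ t * g t) (Set.Icc (0:ℝ) 1) := by
  obtain ⟨C, hC⟩ := isCompact_Icc.exists_bound_of_continuousOn hφ
  refine Integrable.mono' (hgint.norm.const_mul C)
    ((hφ.aestronglyMeasurable measurableSet_Icc).mul hgint.aestronglyMeasurable) ?_
  filter_upwards [ae_restrict_mem measurableSet_Icc] with t ht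
  have h1 : ‖φ t‖ ≤ C := hC t ht
  have : ‖φ t * g t‖ = ‖φ t‖ * ‖g t‖ := norm_mul _ _
  rw [this]
  exact mul_le_mul_of_nonneg_right h1 (norm_nonneg _)

lemma aux_ii (g : ℝ → ℝ) (hgint : MeasureTheory.IntegrableOn g (Set.Icc (0:ℝ) 1))
    (φ : ℝ → ℝ) (hφ : ContinuousOn φ (Set.Icc (0:ℝ) 1)) :
    IntervalIntegrable (fun t => φ t * g t) MeasureTheory.volume 0 1 := by
  rw [intervalIntegrable_iff, uIoc_of_le (by norm_num : (0:ℝ) ≤ 1)]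
  exact (aux_mul_int g hgint φ hφ).mono_set Set.Ioc_subset_Icc_self

lemma aux_moment1 (g : ℝ → ℝ) (hgint : MeasureTheory.IntegrableOn g (Set.Icc (0:ℝ) 1))
    (hgone : (∫ t in (0:ℝ)..1, g t) = 1)
    (hgsym : ∀ᵐ t ∂(MeasureTheory.volume.restrict (Set.Icc (0:ℝ) 1)), g t = g (1 - t)) :
    (∫ t in (0:ℝ)..1, t * g t) = 1/2 := by
  have hsub : (∫ t in (0:ℝ)..1, t * g (1 - t)) = ∫ t in (0:ℝ)..1, (1 - t) * g t := by
    have := intervalIntegral.integral_comp_sub_left (a := (0:ℝ)) (b := 1)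
      (fun u => (1 - u) * g u) 1
    simp only [sub_sub_cancel, sub_zero, sub_self] at this
    exact this
  have hcong : (∫ t in (0:ℝ)..1, t * g t) = ∫ t in (0:ℝ)..1, t * g (1 - t) := by
    apply intervalIntegral.integral_congr_ae
    have h := ae_imp_of_ae_restrict hgsym
    filter_upwards [h] with t ht hmem
    rw [uIoc_of_le (by norm_num : (0:ℝ) ≤ 1)] at hmem
    rw [ht (Set.Ioc_subset_Icc_self hmem)]
  have hint1 : IntervalIntegrable (fun t => t * g t) volume 0 1 :=
    aux_ii g hgint (fun t => t) continuousOn_id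
  have hintg : IntervalIntegrable g volume 0 1 := by
    rw [intervalIntegrable_iff, uIoc_of_le (by norm_num : (0:ℝ) ≤ 1)]
    exact hgint.mono_set Set.Ioc_subset_Icc_self
  have hsub2 : (∫ t in (0:ℝ)..1, (1 - t) * g t)
      = (∫ t in (0:ℝ)..1, g t) - ∫ t in (0:ℝ)..1, t * g t := by
    rw [← intervalIntegral.integral_sub hintg hint1]
    congr 1; funext t; ring
  have := hcong.trans (hsub.trans hsub2)
  rw [hgone] at this
  linarith

lemma aux_param_deriv (x : ℝ) (hx : 0 < x) (g : ℝ → ℝ)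
    (hgint : MeasureTheory.IntegrableOn g (Set.Icc (0:ℝ) 1))
    (h h' : ℝ → ℝ) (hh : ContinuousOn h (Set.Ioi 0)) (hh' : ContinuousOn h' (Set.Ioi 0))
    (hder : ∀ u ∈ Set.Ioi (0:ℝ), HasDerivAt h (h' u) u)
    (n : ℕ) (s₀ : ℝ) (hs₀ : s₀ ∈ Set.Ioo (x/2) (x+x)) :
    HasDerivAt (fun s => ∫ t in (0:ℝ)..1, t^n * h (t*s+(1-t)*x) * g t)
      (∫ t in (0:ℝ)..1, t^(n+1) * h' (t*s₀+(1-t)*x) * g t) s₀ := by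
  have hxK : x ∈ Set.Icc (x/2) (x+x) := ⟨by linarith, by linarith⟩
  have hKpos : Set.Icc (x/2) (x+x) ⊆ Set.Ioi (0:ℝ) := fun u hu => by
    simp only [mem_Ioi]; have := hu.1; linarith
  -- convex combination stays in the interval
  have hcomb : ∀ t ∈ Set.Icc (0:ℝ) 1, ∀ s ∈ Set.Icc (x/2) (x+x),
      t*s+(1-t)*x ∈ Set.Icc (x/2) (x+x) := by
    intro t ht s hs
    constructor
    · nlinarith [ht.1, ht.2, hs.1, hs.2]
    · nlinarith [ht.1, ht.2, hs.1, hs.2]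
  obtain ⟨C, hC⟩ := isCompact_Icc.exists_bound_of_continuousOn (hh'.mono hKpos)
  have hC0 : 0 ≤ C := le_trans (norm_nonneg _) (hC x hxK)
  set ε : ℝ := min (s₀ - x/2) (x + x - s₀) with hε
  have hεpos : 0 < ε := lt_min (by linarith [hs₀.1]) (by linarith [hs₀.2])
  have hball : Metric.ball s₀ ε ⊆ Set.Icc (x/2) (x+x) := by
    intro s hs
    rw [Metric.mem_ball, Real.dist_eq, abs_sub_lt_iff] at hs
    have h1 : ε ≤ s₀ - x/2 := min_le_left _ _
    have h2 : ε ≤ x + x - s₀ := min_le_right _ _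
    constructor <;> linarith [hs.1, hs.2]
  have hgm : AEStronglyMeasurable g (volume.restrict (Set.uIoc (0:ℝ) 1)) := by
    rw [Set.uIoc_of_le (by norm_num : (0:ℝ) ≤ 1)]
    exact (hgint.mono_set Set.Ioc_subset_Icc_self).aestronglyMeasurable
  -- measurability of the integrand for s in the interval
  have hmeas : ∀ s ∈ Set.Icc (x/2) (x+x), ∀ (k : ℕ) (φ : ℝ → ℝ), ContinuousOn φ (Set.Ioi 0) →
      AEStronglyMeasurable (fun t => t^k * φ (t*s+(1-t)*x) * g t)
        (volume.restrict (Set.uIoc (0:ℝ) 1)) := by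
    intro s hs k φ hφ
    have hcont : ContinuousOn (fun t => t^k * φ (t*s+(1-t)*x)) (Set.Icc (0:ℝ) 1) := by
      apply ContinuousOn.mul
      · exact (continuous_pow k).continuousOn
      · apply hφ.comp ((continuous_id.mul continuous_const).add
          ((continuous_const.sub continuous_id).mul continuous_const)).continuousOn
        intro t ht
        exact hKpos (hcomb t ht s hs)
    have h1 : AEStronglyMeasurable (fun t => t^k * φ (t*s+(1-t)*x))
        (volume.restrict (Set.uIoc (0:ℝ) 1)) := by
      have := hcont.aestronglyMeasurable (μ := volume) measurableSet_Icc
      refine this.mono_measure (Measure.restrict_mono ?_ le_rfl)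
      rw [Set.uIoc_of_le (by norm_num : (0:ℝ) ≤ 1)]
      exact Set.Ioc_subset_Icc_self
    exact h1.mul hgm
  have key := intervalIntegral.hasDerivAt_integral_of_dominated_loc_of_deriv_le
    (μ := volume) (a := (0:ℝ)) (b := 1)
    (F := fun s t => t^n * h (t*s+(1-t)*x) * g t)
    (F' := fun s t => t^(n+1) * h' (t*s+(1-t)*x) * g t)
    (bound := fun t => C * ‖g t‖) (x₀ := s₀) (Metric.ball_mem_nhds s₀ hεpos) ?_ ?_ ?_ ?_ ?_ ?_
  · exact key.2
  · -- eventual measurability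
    filter_upwards [Icc_mem_nhds hs₀.1 hs₀.2] with s hs
    exact hmeas s hs n h hh
  · -- integrability at s₀
    rw [intervalIntegrable_iff, uIoc_of_le (by norm_num : (0:ℝ) ≤ 1)]
    refine ((aux_mul_int g hgint (fun t => t^n * h (t*s₀+(1-t)*x)) ?_).mono_set
      Set.Ioc_subset_Icc_self)
    apply ContinuousOn.mul ((continuous_pow n).continuousOn)
    apply (hh.comp ((continuous_id.mul continuous_const).add
      ((continuous_const.sub continuous_id).mul continuous_const)).continuousOn)
    intro t ht
    exact hKpos (hcomb t ht s₀ (Set.Ioo_subset_Icc_self hs₀))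
  · exact hmeas s₀ (Set.Ioo_subset_Icc_self hs₀) (n+1) h' hh'
  · -- bound
    refine Filter.Eventually.of_forall (fun t ht s hs => ?_)
    rw [Set.uIoc_of_le (by norm_num : (0:ℝ) ≤ 1)] at ht
    have htI : t ∈ Set.Icc (0:ℝ) 1 := Set.Ioc_subset_Icc_self ht
    have hu := hcomb t htI s (hball hs)
    have h1 : ‖h' (t*s+(1-t)*x)‖ ≤ C := hC _ hu
    have h2 : |t^(n+1)| ≤ 1 := by
      rw [abs_pow]
      exact pow_le_one₀ (abs_nonneg t) (abs_le.mpr ⟨by linarith [htI.1], htI.2⟩)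
    have : ‖t^(n+1) * h' (t*s+(1-t)*x) * g t‖
        = |t^(n+1)| * ‖h' (t*s+(1-t)*x)‖ * ‖g t‖ := by
      simp [abs_mul]
    rw [this]
    calc |t^(n+1)| * ‖h' (t*s+(1-t)*x)‖ * ‖g t‖ ≤ 1 * C * ‖g t‖ := by
          apply mul_le_mul_of_nonneg_right _ (norm_nonneg _)
          exact mul_le_mul h2 h1 (norm_nonneg _) zero_le_one
      _ = C * ‖g t‖ := by ring
  · -- bound integrable
    rw [intervalIntegrable_iff, uIoc_of_le (by norm_num : (0:ℝ) ≤ 1)]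
    have hbint : MeasureTheory.IntegrableOn (fun t => C * ‖g t‖) (Set.Icc (0:ℝ) 1) :=
      hgint.norm.const_mul C
    exact hbint.mono_set Set.Ioc_subset_Icc_self
  · -- differentiability
    refine Filter.Eventually.of_forall (fun t ht s hs => ?_)
    rw [Set.uIoc_of_le (by norm_num : (0:ℝ) ≤ 1)] at ht
    have htI : t ∈ Set.Icc (0:ℝ) 1 := Set.Ioc_subset_Icc_self ht
    have hu : t*s+(1-t)*x ∈ Set.Ioi (0:ℝ) := hKpos (hcomb t htI s (hball hs))
    have hinner : HasDerivAt (fun s => t*s+(1-t)*x) t s := by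
      simpa using ((hasDerivAt_id s).const_mul t).add_const ((1-t)*x)
    have := ((hder _ hu).comp s hinner).const_mul (t^n) |>.mul_const (g t)
    convert this using 1
    · rfl
    · rfl
    · ring

theorem stmt16' (f : ℝ → ℝ)
    (hsm : ContDiffOn ℝ (⊤ : ℕ∞) f (Set.Ioi 0))
    (hd : ∀ x : ℝ, 0 < x → deriv f x ≠ 0)
    (g : ℝ → ℝ)
    (hg0 : ∀ᵐ t ∂(MeasureTheory.volume.restrict (Set.Icc (0:ℝ) 1)), 0 ≤ g t)
    (hgint : MeasureTheory.IntegrableOn g (Set.Icc (0:ℝ) 1))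
    (hgone : (∫ t in (0:ℝ)..1, g t) = 1)
    (hgsym : ∀ᵐ t ∂(MeasureTheory.volume.restrict (Set.Icc (0:ℝ) 1)), g t = g (1 - t))
    (M : ℝ → ℝ → ℝ)
    (hMsm : ContDiffOn ℝ (⊤ : ℕ∞) (fun p : ℝ × ℝ => M p.1 p.2) {p : ℝ × ℝ | 0 < p.1 ∧ 0 < p.2})
    (hMpos : ∀ x y : ℝ, 0 < x → 0 < y → 0 < M x y)
    (hMint : ∀ x y : ℝ, 0 < x → 0 < y → min x y ≤ M x y ∧ M x y ≤ max x y)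
    (hMsym : ∀ x y : ℝ, 0 < x → 0 < y → M x y = M y x)
    (heq : ∀ x y : ℝ, 0 < x → 0 < y →
      f (M x y) = ∫ t in (0:ℝ)..1, f (t * x + (1 - t) * y) * g t) :
    ∀ x : ℝ, 0 < x →
      iteratedDeriv 2 (fun s => M s x) x =
        (∫ t in (0:ℝ)..1, (t - 1 / 2) ^ 2 * g t) * (deriv (deriv f) x / deriv f x) := by
  intro x hx
  have hU : IsOpen {p : ℝ × ℝ | 0 < p.1 ∧ 0 < p.2} := by
    have : {p : ℝ × ℝ | 0 < p.1 ∧ 0 < p.2}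
        = (Prod.fst ⁻¹' Set.Ioi 0) ∩ (Prod.snd ⁻¹' Set.Ioi 0) := rfl
    rw [this]
    exact (isOpen_Ioi.preimage continuous_fst).inter (isOpen_Ioi.preimage continuous_snd)
  set d : ℝ → ℝ := fun s => M s x with hd_def
  -- smoothness of d
  have hdC : ContDiffOn ℝ (⊤ : ℕ∞) d (Set.Ioi 0) := by
    have : d = (fun p : ℝ × ℝ => M p.1 p.2) ∘ (fun s => (s, x)) := rfl
    rw [this]
    exact hMsm.comp (contDiffOn_id.prodMk contDiffOn_const) (fun s hs => ⟨hs, hx⟩)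
  have hd2C : ContDiffOn ℝ (⊤ : ℕ∞) (deriv d) (Set.Ioi 0) :=
    hdC.deriv_of_isOpen isOpen_Ioi (by simp)
  have hdDeriv : ∀ s ∈ Set.Ioi (0:ℝ), HasDerivAt d (deriv d s) s := fun s hs =>
    ((hdC.contDiffAt (isOpen_Ioi.mem_nhds hs)).differentiableAt (by simp)).hasDerivAt
  -- smoothness of f derivatives
  have hf1C : ContDiffOn ℝ (⊤ : ℕ∞) (deriv f) (Set.Ioi 0) := hsm.deriv_of_isOpen isOpen_Ioi (by simp)
  have hf2C : ContDiffOn ℝ (⊤ : ℕ∞) (deriv (deriv f)) (Set.Ioi 0) :=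
    hf1C.deriv_of_isOpen isOpen_Ioi (by simp)
  have hfDeriv : ∀ u ∈ Set.Ioi (0:ℝ), HasDerivAt f (deriv f u) u := fun u hu =>
    ((hsm.contDiffAt (isOpen_Ioi.mem_nhds hu)).differentiableAt (by simp)).hasDerivAt
  have hf1Deriv : ∀ u ∈ Set.Ioi (0:ℝ), HasDerivAt (deriv f) (deriv (deriv f) u) u := fun u hu =>
    ((hf1C.contDiffAt (isOpen_Ioi.mem_nhds hu)).differentiableAt (by simp)).hasDerivAt
  -- M(s,s) = s
  have hdiagEq : ∀ s : ℝ, 0 < s → M s s = s := by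
    intro s hs
    have h1 := (hMint s s hs hs).1
    have h2 := (hMint s s hs hs).2
    simp only [min_self, max_self] at h1 h2
    linarith
  have hdx : d x = x := hdiagEq x hx
  -- derivative of d at x is 1/2
  have hGdiffAt : DifferentiableAt ℝ (fun p : ℝ × ℝ => M p.1 p.2) (x, x) :=
    (hMsm.contDiffAt (hU.mem_nhds ⟨hx, hx⟩)).differentiableAt (by simp)
  set D := fderiv ℝ (fun p : ℝ × ℝ => M p.1 p.2) (x, x) with hD_def
  have hGf : HasFDerivAt (fun p : ℝ × ℝ => M p.1 p.2) D (x, x) := hGdiffAt.hasFDerivAt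
  have hd1 : HasDerivAt d (D (1, 0)) x := by
    exact hGf.comp_hasDerivAt (f := fun s : ℝ => (s, x)) x
      ((hasDerivAt_id x).prodMk (hasDerivAt_const x x))
  have he1 : HasDerivAt (fun s => M x s) (D (0, 1)) x := by
    exact hGf.comp_hasDerivAt (f := fun s : ℝ => (x, s)) x
      ((hasDerivAt_const x x).prodMk (hasDerivAt_id x))
  have hdiagD : HasDerivAt (fun s => M s s) (D (1, 1)) x := by
    exact hGf.comp_hasDerivAt (f := fun s : ℝ => (s, s)) x
      ((hasDerivAt_id x).prodMk (hasDerivAt_id x))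
  have hde : d =ᶠ[nhds x] (fun s => M x s) := by
    filter_upwards [isOpen_Ioi.mem_nhds hx] with s hs
    exact hMsym s x hs hx
  have hDsym : D (0, 1) = D (1, 0) := by
    have h2 : HasDerivAt d (D (0, 1)) x := he1.congr_of_eventuallyEq hde
    exact h2.unique hd1
  have hDone : D (1, 1) = 1 := by
    have hMss : (fun s => M s s) =ᶠ[nhds x] id := by
      filter_upwards [isOpen_Ioi.mem_nhds hx] with s hs
      exact hdiagEq s hs
    have : HasDerivAt id (D (1, 1)) x := hdiagD.congr_of_eventuallyEq hMss.symm
    exact this.unique (hasDerivAt_id x)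
  have hDsum : D (1, 1) = D (1, 0) + D (0, 1) := by
    have : ((1:ℝ), (1:ℝ)) = ((1:ℝ), (0:ℝ)) + ((0:ℝ), (1:ℝ)) := by simp [Prod.ext_iff]
    rw [this, map_add]
  have hdhalf : D (1, 0) = 1 / 2 := by
    rw [hDsym] at hDsum; rw [hDone] at hDsum; linarith
  have hd1' : HasDerivAt d (1 / 2) x := hdhalf ▸ hd1
  have hderivd : deriv d x = 1 / 2 := hd1'.deriv
  -- ψ := f ∘ d
  set ψ : ℝ → ℝ := fun s => f (d s) with hψ_def
  have hψDeriv : ∀ s ∈ Set.Ioi (0:ℝ), HasDerivAt ψ (deriv f (d s) * deriv d s) s := by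
    intro s hs
    have hds : d s ∈ Set.Ioi (0:ℝ) := hMpos s x hs hx
    exact (hfDeriv _ hds).comp s (hdDeriv s hs)
  have hψd1 : deriv ψ =ᶠ[nhds x] (fun s => deriv f (d s) * deriv d s) := by
    filter_upwards [isOpen_Ioi.mem_nhds hx] with s hs
    exact (hψDeriv s hs).deriv
  -- second derivative of ψ at x
  have ha : HasDerivAt (fun s => deriv f (d s)) (deriv (deriv f) x * (1 / 2)) x := by
    have hf2 : HasDerivAt (deriv f) (deriv (deriv f) (d x)) (d x) := by
      rw [hdx]; exact hf1Deriv x hx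
    have := hf2.comp x hd1'
    rwa [hdx] at this
  have hb : HasDerivAt (deriv d) (deriv (deriv d) x) x :=
    ((hd2C.contDiffAt (isOpen_Ioi.mem_nhds hx)).differentiableAt (by simp)).hasDerivAt
  have hψ2 : HasDerivAt (fun s => deriv f (d s) * deriv d s)
      (deriv (deriv f) x * (1 / 2) * deriv d x + deriv f (d x) * deriv (deriv d) x) x :=
    ha.mul hb
  have hψψ : deriv (deriv ψ) x
      = deriv (deriv f) x * (1 / 2) * (1 / 2) + deriv f x * deriv (deriv d) x := by
    rw [hψd1.deriv_eq, hψ2.deriv, hderivd, hdx]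
  -- φ := parameter integral
  set φ : ℝ → ℝ := fun s => ∫ t in (0:ℝ)..1, f (t * s + (1 - t) * x) * g t with hφ_def
  have hφeq : φ = fun s => ∫ t in (0:ℝ)..1, t ^ 0 * f (t * s + (1 - t) * x) * g t := by
    funext s; simp [hφ_def]
  have hxIoo : x ∈ Set.Ioo (x / 2) (x + x) := ⟨by linarith, by linarith⟩
  have hfc : ContinuousOn f (Set.Ioi (0:ℝ)) := hsm.continuousOn
  have hf1c : ContinuousOn (deriv f) (Set.Ioi (0:ℝ)) := hf1C.continuousOn
  have hf2c : ContinuousOn (deriv (deriv f)) (Set.Ioi (0:ℝ)) := hf2C.continuousOn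
  set φ₁ : ℝ → ℝ := fun s => ∫ t in (0:ℝ)..1, t ^ 1 * deriv f (t * s + (1 - t) * x) * g t
    with hφ₁_def
  have hφDeriv : ∀ s ∈ Set.Ioo (x / 2) (x + x), HasDerivAt φ (φ₁ s) s := by
    intro s hs
    rw [hφeq]
    exact aux_param_deriv x hx g hgint f (deriv f) hfc hf1c hfDeriv 0 s hs
  have hφd1 : deriv φ =ᶠ[nhds x] φ₁ := by
    filter_upwards [isOpen_Ioo.mem_nhds hxIoo] with s hs
    exact (hφDeriv s hs).deriv
  have hφ₁Deriv : HasDerivAt φ₁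
      (∫ t in (0:ℝ)..1, t ^ 2 * deriv (deriv f) (t * x + (1 - t) * x) * g t) x :=
    aux_param_deriv x hx g hgint (deriv f) (deriv (deriv f)) hf1c hf2c hf1Deriv 1 x hxIoo
  have hsimp : (∫ t in (0:ℝ)..1, t ^ 2 * deriv (deriv f) (t * x + (1 - t) * x) * g t)
      = deriv (deriv f) x * ∫ t in (0:ℝ)..1, t ^ 2 * g t := by
    have h1 : ∀ t : ℝ, t * x + (1 - t) * x = x := fun t => by ring
    simp only [h1]
    rw [← intervalIntegral.integral_const_mul]
    congr 1; funext t; ring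
  have hφφ : deriv (deriv φ) x = deriv (deriv f) x * ∫ t in (0:ℝ)..1, t ^ 2 * g t := by
    rw [hφd1.deriv_eq, hφ₁Deriv.deriv, hsimp]
  -- ψ = φ near x
  have hψφ : ψ =ᶠ[nhds x] φ := by
    filter_upwards [isOpen_Ioi.mem_nhds hx] with s hs
    exact heq s x hs hx
  have hkey : deriv (deriv f) x * (1 / 2) * (1 / 2) + deriv f x * deriv (deriv d) x
      = deriv (deriv f) x * ∫ t in (0:ℝ)..1, t ^ 2 * g t := by
    rw [← hψψ, ← hφφ]
    exact (hψφ.deriv).deriv_eq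
  -- moments
  have hm1 : (∫ t in (0:ℝ)..1, t * g t) = 1 / 2 := aux_moment1 g hgint hgone hgsym
  have hintg : IntervalIntegrable g volume 0 1 := by
    rw [intervalIntegrable_iff, uIoc_of_le (by norm_num : (0:ℝ) ≤ 1)]
    exact hgint.mono_set Set.Ioc_subset_Icc_self
  have hint1 : IntervalIntegrable (fun t => t * g t) volume 0 1 :=
    aux_ii g hgint (fun t => t) continuousOn_id
  have hint2 : IntervalIntegrable (fun t => t ^ 2 * g t) volume 0 1 :=
    aux_ii g hgint (fun t => t ^ 2) (continuous_pow 2).continuousOn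
  have hintc : IntervalIntegrable (fun t => (t - 1 / 2) ^ 2 * g t) volume 0 1 :=
    aux_ii g hgint (fun t => (t - 1 / 2) ^ 2)
      (((continuous_id.sub continuous_const).pow 2).continuousOn)
  have hc1 : (∫ t in (0:ℝ)..1, (t - 1 / 2) ^ 2 * g t)
      = (∫ t in (0:ℝ)..1, t ^ 2 * g t) - 1 / 4 := by
    have hexp : ∀ t : ℝ, (t - 1 / 2) ^ 2 * g t
        = t ^ 2 * g t - (t * g t - (1 / 4) * g t) := fun t => by ring
    calc (∫ t in (0:ℝ)..1, (t - 1 / 2) ^ 2 * g t)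
        = ∫ t in (0:ℝ)..1, (t ^ 2 * g t - (t * g t - (1 / 4) * g t)) := by
          simp only [hexp]
      _ = (∫ t in (0:ℝ)..1, t ^ 2 * g t)
            - ∫ t in (0:ℝ)..1, (t * g t - (1 / 4) * g t) := by
          rw [intervalIntegral.integral_sub hint2 (hint1.sub (hintg.const_mul _))]
      _ = (∫ t in (0:ℝ)..1, t ^ 2 * g t)
            - ((∫ t in (0:ℝ)..1, t * g t) - ∫ t in (0:ℝ)..1, (1 / 4) * g t) := by
          rw [intervalIntegral.integral_sub hint1 (hintg.const_mul _)]
      _ = (∫ t in (0:ℝ)..1, t ^ 2 * g t) - 1 / 4 := by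
          rw [hm1, intervalIntegral.integral_const_mul, hgone]; ring
  -- conclude
  have hQ : iteratedDeriv 2 d x = deriv (deriv d) x := by
    rw [iteratedDeriv_succ, iteratedDeriv_one]
  rw [hQ, hc1]
  have hf' := hd x hx
  field_simp
  linarith [hkey]

/-- The characteristic function of the g-weighted integral mean of the first kind
with integrality function f is c₁(g) · f''/f'. -/
theorem stmt16 (f : ℝ → ℝ)
    (hmono : StrictMonoOn f (Set.Ioi 0) ∨ StrictAntiOn f (Set.Ioi 0))
    (hsm : ContDiffOn ℝ (⊤ : ℕ∞) f (Set.Ioi 0))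
    (hd : ∀ x : ℝ, 0 < x → deriv f x ≠ 0)
    (g : ℝ → ℝ) (hg : IsSymmDist g)
    (M : ℝ → ℝ → ℝ) (hM : IsMean M)
    (heq : ∀ x y : ℝ, 0 < x → 0 < y →
      f (M x y) = ∫ t in (0:ℝ)..1, f (t * x + (1 - t) * y) * g t) :
    ∀ x : ℝ, 0 < x →
      charFun M x =
        (∫ t in (0:ℝ)..1, (t - 1 / 2) ^ 2 * g t) * (deriv (deriv f) x / deriv f x) := by
  obtain ⟨hMsm, hMpos, hMint, hMsym⟩ := hM
  obtain ⟨hg0, hgint, hgone, hgsym⟩ := hg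
  intro x hx
  have := stmt16' f hsm hd g hg0 hgint hgone hgsym M hMsm hMpos hMint hMsym heq x hx
  simpa [_root_.charFun] using this
end

section
/- Let I ⊆ ℝ be a nonempty open interval, let f : I → (0,∞) be a strictly monotonic C^∞ function with nowhere-vanishing derivative and with f(I) = (0,∞), let g : [0,1] → ℝ be a symmetric distribution function, and let M be a mean satisfying M(f(x), f(y)) = ∫₀¹ f(t x + (1−t) y) g(t) dt for all x,y ∈ I (the g-weighted integral mean of the second kind with integrality function f). Then for all x ∈ I the characteristic function of M satisfies Q_M(f(x)) = −μ(g) · f''(x)/f'(x)², where μ(g) := ∫₀¹ t(1−t) g(t) dt. -/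
open Real Set MeasureTheory

lemma intInt (g : ℝ → ℝ) (hg : IntegrableOn g (Icc (0:ℝ) 1)) (c : ℝ → ℝ) (hc : Continuous c) :
    IntervalIntegrable (fun t => c t * g t) volume 0 1 := by
  obtain ⟨C, hC⟩ := isCompact_Icc.exists_bound_of_continuousOn (f := c) hc.continuousOn
  rw [intervalIntegrable_iff_integrableOn_Ioc_of_le (by norm_num)]
  refine Integrable.bdd_mul (c := C) (hg.mono_set Ioc_subset_Icc_self)
    (hc.aestronglyMeasurable.restrict) ?_
  filter_upwards [ae_restrict_mem measurableSet_Ioc] with t ht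
  exact hC t (Ioc_subset_Icc_self ht)

lemma symHalf (g : ℝ → ℝ) (hg : IntegrableOn g (Icc (0:ℝ) 1))
    (hone : (∫ t in (0:ℝ)..1, g t) = 1)
    (hsym : ∀ᵐ t ∂(volume.restrict (Icc (0:ℝ) 1)), g t = g (1 - t)) :
    (∫ t in (0:ℝ)..1, t * g t) = 1/2 := by
  have hint_t : IntervalIntegrable (fun t => t * g t) volume 0 1 :=
    intInt g hg _ continuous_id
  have hint_1t : IntervalIntegrable (fun t => (1 - t) * g t) volume 0 1 :=
    intInt g hg _ (by continuity)
  have hsym' := ae_imp_of_ae_restrict hsym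
  have e1 : (∫ t in (0:ℝ)..1, (1 - t) * g t) = ∫ t in (0:ℝ)..1, (1 - t) * g (1 - t) := by
    apply intervalIntegral.integral_congr_ae
    filter_upwards [hsym'] with t ht hmem
    rw [uIoc_of_le (by norm_num : (0:ℝ) ≤ 1)] at hmem
    rw [ht (Ioc_subset_Icc_self hmem)]
  have e2 : (∫ t in (0:ℝ)..1, (1 - t) * g (1 - t)) = ∫ t in (0:ℝ)..1, t * g t := by
    have := intervalIntegral.integral_comp_sub_left (a := (0:ℝ)) (b := 1) (fun s => s * g s) 1
    simpa using this
  have e3 : (∫ t in (0:ℝ)..1, (t * g t + (1 - t) * g t)) = ∫ t in (0:ℝ)..1, g t :=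
    intervalIntegral.integral_congr (fun t _ => by ring)
  rw [intervalIntegral.integral_add hint_t hint_1t] at e3
  linarith [e1, e2, e3, hone]

lemma lemA (I : Set ℝ) (hIo : IsOpen I) (hIc : I.OrdConnected)
    (φ ψ : ℝ → ℝ) (hder : ∀ v ∈ I, HasDerivAt φ (ψ v) v)
    (hφ : ContinuousOn φ I) (hψ : ContinuousOn ψ I)
    (g : ℝ → ℝ) (hg : IntegrableOn g (Icc (0:ℝ) 1))
    (c : ℝ → ℝ) (hc : Continuous c)
    (x u : ℝ) (hx : x ∈ I) (hu : u ∈ I) :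
    HasDerivAt (fun s => ∫ t in (0:ℝ)..1, c t * φ (t*s+(1-t)*x) * g t)
      (∫ t in (0:ℝ)..1, (c t * t) * ψ (t*u+(1-t)*x) * g t) u := by
  obtain ⟨ε, hε, hball⟩ := Metric.isOpen_iff.1 hIo u hu
  have hε2 : 0 < ε/2 := by linarith
  set a := min x (u - ε/2) with ha_def
  set b := max x (u + ε/2) with hb_def
  have haI : a ∈ I := by
    rcases min_cases x (u - ε/2) with ⟨h, _⟩ | ⟨h, _⟩ <;> rw [ha_def, h]
    · exact hx
    · refine hball ?_
      rw [Metric.mem_ball, Real.dist_eq, show u - ε/2 - u = -(ε/2) by ring, abs_neg,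
        abs_of_pos hε2]
      linarith
  have hbI : b ∈ I := by
    rcases max_cases x (u + ε/2) with ⟨h, _⟩ | ⟨h, _⟩ <;> rw [hb_def, h]
    · exact hx
    · refine hball ?_
      rw [Metric.mem_ball, Real.dist_eq, show u + ε/2 - u = ε/2 by ring, abs_of_pos hε2]
      linarith
  have hK : Icc a b ⊆ I := hIc.out haI hbI
  have hmem : ∀ t ∈ Icc (0:ℝ) 1, ∀ s ∈ Metric.ball u (ε/2), t*s+(1-t)*x ∈ Icc a b := by
    intro t ht s hs
    rw [Metric.mem_ball, Real.dist_eq, abs_lt] at hs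
    obtain ⟨ht0, ht1⟩ := ht
    have hax : a ≤ x := min_le_left _ _
    have has : a ≤ s := le_trans (min_le_right _ _) (by linarith)
    have hxb : x ≤ b := le_max_left _ _
    have hsb : s ≤ b := le_trans (by linarith) (le_max_right _ _)
    constructor
    · nlinarith
    · nlinarith
  -- bounds
  obtain ⟨Cψ, hCψ⟩ := isCompact_Icc.exists_bound_of_continuousOn (hψ.mono hK)
  obtain ⟨Cφ, hCφ⟩ := isCompact_Icc.exists_bound_of_continuousOn (f := φ) (hφ.mono hK)
  obtain ⟨Cc, hCc⟩ := isCompact_Icc.exists_bound_of_continuousOn (f := c)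
    (hc.continuousOn (s := Icc (0:ℝ) 1))
  have hCc0 : 0 ≤ Cc := le_trans (norm_nonneg _) (hCc 0 (by norm_num))
  have hCψ0 : 0 ≤ Cψ := le_trans (norm_nonneg _)
    (hCψ x (by exact ⟨min_le_left _ _, le_max_left _ _⟩))
  have hIoc : (Set.uIoc (0:ℝ) 1) = Ioc 0 1 := uIoc_of_le (by norm_num)
  have hgIoc : IntegrableOn g (Ioc (0:ℝ) 1) := hg.mono_set Ioc_subset_Icc_self
  have hgaem : AEStronglyMeasurable g (volume.restrict (Set.uIoc (0:ℝ) 1)) := by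
    rw [hIoc]; exact hgIoc.aestronglyMeasurable
  have hmeas : ∀ s ∈ Metric.ball u (ε/2),
      AEStronglyMeasurable (fun t => c t * φ (t*s+(1-t)*x) * g t)
        (volume.restrict (Set.uIoc (0:ℝ) 1)) := by
    intro s hs
    refine AEStronglyMeasurable.mul ?_ hgaem
    rw [hIoc]
    refine ContinuousOn.aestronglyMeasurable ?_ measurableSet_Ioc
    refine (hc.continuousOn).mul ((hφ.mono hK).comp (by fun_prop) ?_)
    intro t ht
    exact hmem t (Ioc_subset_Icc_self ht) s hs
  refine (intervalIntegral.hasDerivAt_integral_of_dominated_loc_of_deriv_le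
    (F := fun s t => c t * φ (t*s+(1-t)*x) * g t)
    (F' := fun s t => (c t * t) * ψ (t*s+(1-t)*x) * g t)
    (bound := fun t => (Cc * Cψ) * ‖g t‖) (Metric.ball_mem_nhds u hε2) ?_ ?_ ?_ ?_ ?_ ?_).2
  · exact Filter.eventually_iff_exists_mem.2 ⟨_, Metric.ball_mem_nhds u hε2, hmeas⟩
  · -- integrability of F u
    rw [intervalIntegrable_iff_integrableOn_Ioc_of_le (by norm_num)]
    refine Integrable.bdd_mul (c := Cc * Cφ) hgIoc ?_ ?_
    · refine ContinuousOn.aestronglyMeasurable ?_ measurableSet_Ioc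
      refine (hc.continuousOn).mul ((hφ.mono hK).comp (by fun_prop) ?_)
      intro t ht
      exact hmem t (Ioc_subset_Icc_self ht) u (Metric.mem_ball_self hε2)
    · filter_upwards [ae_restrict_mem measurableSet_Ioc] with t ht
      have htI := Ioc_subset_Icc_self ht
      have h1 := hCc t htI
      have h2 := hCφ _ (hmem t htI u (Metric.mem_ball_self hε2))
      have h3 : 0 ≤ Cφ := le_trans (norm_nonneg _) h2
      calc ‖c t * φ (t*u+(1-t)*x)‖ = ‖c t‖ * ‖φ (t*u+(1-t)*x)‖ := norm_mul _ _
        _ ≤ Cc * Cφ := mul_le_mul h1 h2 (norm_nonneg _) hCc0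
  · -- measurability of F' u
    refine AEStronglyMeasurable.mul ?_ hgaem
    rw [hIoc]
    refine ContinuousOn.aestronglyMeasurable ?_ measurableSet_Ioc
    refine ((hc.continuousOn).mul continuous_id.continuousOn).mul
      ((hψ.mono hK).comp (by fun_prop) ?_)
    intro t ht
    exact hmem t (Ioc_subset_Icc_self ht) u (Metric.mem_ball_self hε2)
  · -- bound
    refine Filter.Eventually.of_forall (fun t ht s hs => ?_)
    rw [hIoc] at ht
    have htI := Ioc_subset_Icc_self ht
    have h1 := hCc t htI
    have h2 := hCψ _ (hmem t htI s hs)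
    have ht1 : ‖t‖ ≤ 1 := by rw [Real.norm_eq_abs, abs_of_pos ht.1]; exact ht.2
    have key : ‖c t‖ * ‖t‖ * ‖ψ (t*s+(1-t)*x)‖ ≤ Cc * Cψ := by
      have k1 : ‖c t‖ * ‖t‖ ≤ Cc * 1 := mul_le_mul h1 ht1 (norm_nonneg t) hCc0
      have k2 : (‖c t‖ * ‖t‖) * ‖ψ (t*s+(1-t)*x)‖ ≤ (Cc * 1) * Cψ :=
        mul_le_mul k1 h2 (norm_nonneg _) (by positivity)
      linarith
    calc ‖(c t * t) * ψ (t*s+(1-t)*x) * g t‖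
        = (‖c t‖ * ‖t‖ * ‖ψ (t*s+(1-t)*x)‖) * ‖g t‖ := by
          rw [norm_mul, norm_mul, norm_mul]
      _ ≤ (Cc * Cψ) * ‖g t‖ := mul_le_mul_of_nonneg_right key (norm_nonneg _)
  · -- bound integrable
    rw [intervalIntegrable_iff_integrableOn_Ioc_of_le (by norm_num)]
    exact hgIoc.norm.const_mul _
  · -- differentiability
    refine Filter.Eventually.of_forall (fun t ht s hs => ?_)
    rw [hIoc] at ht
    have hyI : t*s+(1-t)*x ∈ I := hK (hmem t (Ioc_subset_Icc_self ht) s hs)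
    have base : HasDerivAt (fun s => t*s+(1-t)*x) t s := by
      simpa using ((hasDerivAt_id s).const_mul t).add_const ((1-t)*x)
    have comp : HasDerivAt (fun s => φ (t*s+(1-t)*x)) (ψ (t*s+(1-t)*x) * t) s :=
      (hder _ hyI).comp s base
    have := (comp.const_mul (c t)).mul_const (g t)
    convert this using 1
    · rfl
    · ring

theorem stmt17' (I : Set ℝ) (hIo : IsOpen I) (hIc : I.OrdConnected) (hne : I.Nonempty)
    (f : ℝ → ℝ)
    (hmono : StrictMonoOn f I ∨ StrictAntiOn f I)
    (hsm : ContDiffOn ℝ (⊤ : ℕ∞) f I)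
    (hd : ∀ x ∈ I, deriv f x ≠ 0)
    (him : f '' I = Set.Ioi 0)
    (g : ℝ → ℝ)
    (hg0 : ∀ᵐ t ∂(volume.restrict (Icc (0:ℝ) 1)), 0 ≤ g t)
    (hgInt : IntegrableOn g (Icc (0:ℝ) 1))
    (hgOne : (∫ t in (0:ℝ)..1, g t) = 1)
    (hgSym : ∀ᵐ t ∂(volume.restrict (Icc (0:ℝ) 1)), g t = g (1 - t))
    (M : ℝ → ℝ → ℝ)
    (hMsm : ContDiffOn ℝ (⊤ : ℕ∞) (fun p : ℝ × ℝ => M p.1 p.2) {p : ℝ × ℝ | 0 < p.1 ∧ 0 < p.2})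
    (heq : ∀ x ∈ I, ∀ y ∈ I,
      M (f x) (f y) = ∫ t in (0:ℝ)..1, f (t * x + (1 - t) * y) * g t) :
    ∀ x ∈ I,
      iteratedDeriv 2 (fun s => M s (f x)) (f x) =
        -(∫ t in (0:ℝ)..1, t * (1 - t) * g t) *
          (deriv (deriv f) x / (deriv f x) ^ 2) := by
  intro x hx
  -- facts about f
  have hsm1 : ContDiffOn ℝ (⊤ : ℕ∞) (deriv f) I := hsm.deriv_of_isOpen (m := (⊤ : ℕ∞)) hIo (by simp)
  have hfc : ContinuousOn f I := hsm.continuousOn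
  have hf1c : ContinuousOn (deriv f) I := hsm1.continuousOn
  have hf2c : ContinuousOn (deriv (deriv f)) I :=
    (hsm1.deriv_of_isOpen (m := (⊤ : ℕ∞)) hIo (by simp)).continuousOn
  have hfd : ∀ u ∈ I, HasDerivAt f (deriv f u) u := fun u hu =>
    ((hsm.differentiableOn (by simp)).differentiableAt (hIo.mem_nhds hu)).hasDerivAt
  have hf1d : ∀ u ∈ I, HasDerivAt (deriv f) (deriv (deriv f) u) u := fun u hu =>
    ((hsm1.differentiableOn (by simp)).differentiableAt (hIo.mem_nhds hu)).hasDerivAt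
  have hfpos : ∀ u ∈ I, 0 < f u := fun u hu => by
    have : f u ∈ f '' I := mem_image_of_mem f hu
    rw [him] at this; exact this
  have hfx : 0 < f x := hfpos x hx
  -- the section φ = M(·, f x)
  have hφsm : ContDiffOn ℝ (⊤ : ℕ∞) (fun s => M s (f x)) (Ioi 0) := by
    have h2 : ContDiffOn ℝ (⊤ : ℕ∞) (fun s : ℝ => (s, f x)) (Ioi 0) :=
      (contDiff_id.prodMk contDiff_const).contDiffOn
    have := hMsm.comp h2 (fun s hs => ⟨hs, hfx⟩)
    exact this
  have hφ1sm : ContDiffOn ℝ (⊤ : ℕ∞) (deriv fun s => M s (f x)) (Ioi 0) :=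
    hφsm.deriv_of_isOpen (m := (⊤ : ℕ∞)) isOpen_Ioi (by simp)
  have hφd : ∀ s, 0 < s → HasDerivAt (fun s => M s (f x)) (deriv (fun s => M s (f x)) s) s :=
    fun s hs =>
      ((hφsm.differentiableOn (by simp)).differentiableAt (isOpen_Ioi.mem_nhds hs)).hasDerivAt
  have hφ1d : HasDerivAt (deriv fun s => M s (f x))
      (deriv (deriv fun s => M s (f x)) (f x)) (f x) :=
    ((hφ1sm.differentiableOn (by simp)).differentiableAt (isOpen_Ioi.mem_nhds hfx)).hasDerivAt
  -- H1
  set H1 : ℝ → ℝ := fun s => ∫ t in (0:ℝ)..1, (1*t) * deriv f (t*s+(1-t)*x) * g t with hH1def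
  -- key1
  have key1 : ∀ u ∈ I, deriv (fun s => M s (f x)) (f u) * deriv f u = H1 u := by
    intro u hu
    have hH := lemA I hIo hIc f (deriv f) hfd hfc hf1c g hgInt
      (fun _ => (1:ℝ)) continuous_const x u hx hu
    have hfun : (fun s => ∫ t in (0:ℝ)..1, (fun _ : ℝ => (1:ℝ)) t * f (t*s+(1-t)*x) * g t)
        = fun s => ∫ t in (0:ℝ)..1, f (t*s+(1-t)*x) * g t := by
      funext s; simp only [one_mul]
    rw [hfun] at hH
    have hcomp : HasDerivAt (fun s => M (f s) (f x))
        (deriv (fun s => M s (f x)) (f u) * deriv f u) u :=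
      (hφd (f u) (hfpos u hu)).comp u (hfd u hu)
    have heqn : (fun s => M (f s) (f x)) =ᶠ[nhds u]
        fun s => ∫ t in (0:ℝ)..1, f (t*s+(1-t)*x) * g t :=
      Filter.eventually_iff_exists_mem.2 ⟨I, hIo.mem_nhds hu, fun v hv => heq v hv x hx⟩
    exact (hcomp.congr_of_eventuallyEq heqn.symm).unique hH
  -- second derivative of H1 at x
  have hH1deriv : HasDerivAt H1
      (∫ t in (0:ℝ)..1, ((1*t)*t) * deriv (deriv f) (t*x+(1-t)*x) * g t) x := by
    have := lemA I hIo hIc (deriv f) (deriv (deriv f)) hf1d hf1c hf2c g hgInt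
      (fun t => 1*t) (by continuity) x x hx hx
    exact this
  -- key2
  have key2 : HasDerivAt (fun u => deriv (fun s => M s (f x)) (f u) * deriv f u)
      (deriv (deriv fun s => M s (f x)) (f x) * deriv f x * deriv f x
        + deriv (fun s => M s (f x)) (f x) * deriv (deriv f) x) x := by
    have h1 : HasDerivAt (fun u => deriv (fun s => M s (f x)) (f u))
        (deriv (deriv fun s => M s (f x)) (f x) * deriv f x) x :=
      hφ1d.comp x (hfd x hx)
    exact h1.mul (hf1d x hx)
  have hKeq : (fun u => deriv (fun s => M s (f x)) (f u) * deriv f u) =ᶠ[nhds x] H1 :=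
    Filter.eventually_iff_exists_mem.2 ⟨I, hIo.mem_nhds hx, fun v hv => key1 v hv⟩
  have key2' : deriv (deriv fun s => M s (f x)) (f x) * deriv f x * deriv f x
        + deriv (fun s => M s (f x)) (f x) * deriv (deriv f) x
      = ∫ t in (0:ℝ)..1, ((1*t)*t) * deriv (deriv f) (t*x+(1-t)*x) * g t :=
    (key2.congr_of_eventuallyEq hKeq.symm).unique hH1deriv
  -- integral computations
  have T1 : (∫ t in (0:ℝ)..1, t * g t) = 1/2 := symHalf g hgInt hgOne hgSym
  have hint_t : IntervalIntegrable (fun t => t * g t) volume 0 1 :=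
    intInt g hgInt _ continuous_id
  have hint_tt : IntervalIntegrable (fun t => t*(1-t) * g t) volume 0 1 :=
    intInt g hgInt (fun t => t*(1-t)) (by continuity)
  have hVcalc : (∫ t in (0:ℝ)..1, ((1*t)*t) * deriv (deriv f) (t*x+(1-t)*x) * g t)
      = deriv (deriv f) x * (1/2 - ∫ t in (0:ℝ)..1, t * (1-t) * g t) := by
    have e : EqOn (fun t => ((1*t)*t) * deriv (deriv f) (t*x+(1-t)*x) * g t)
        (fun t => deriv (deriv f) x * (t * g t - t*(1-t) * g t)) (uIcc (0:ℝ) 1) := by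
      intro t _
      have hxx : t*x+(1-t)*x = x := by ring
      simp only [hxx]; ring
    rw [intervalIntegral.integral_congr e, intervalIntegral.integral_const_mul,
      intervalIntegral.integral_sub hint_t hint_tt, T1]
  have hP : deriv (fun s => M s (f x)) (f x) = 1/2 := by
    have h := key1 x hx
    have e : H1 x = deriv f x * (1/2) := by
      have e2 : EqOn (fun t => (1*t) * deriv f (t*x+(1-t)*x) * g t)
          (fun t => deriv f x * (t * g t)) (uIcc (0:ℝ) 1) := by
        intro t _
        have hxx : t*x+(1-t)*x = x := by ring
        simp only [hxx]; ring
      have hH1x : H1 x = ∫ t in (0:ℝ)..1, (1*t) * deriv f (t*x+(1-t)*x) * g t := rfl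
      rw [hH1x, intervalIntegral.integral_congr e2, intervalIntegral.integral_const_mul, T1]
    rw [e] at h
    have hdx := hd x hx
    have : deriv (fun s => M s (f x)) (f x) * deriv f x = 1/2 * deriv f x := by linarith
    exact mul_right_cancel₀ hdx this
  -- conclusion
  rw [iteratedDeriv_succ, iteratedDeriv_one]
  have hdx := hd x hx
  have hd2 : deriv f x ^ 2 ≠ 0 := pow_ne_zero 2 hdx
  rw [hVcalc, hP] at key2'
  have main : deriv (deriv fun s => M s (f x)) (f x) * (deriv f x * deriv f x)
      = -(∫ t in (0:ℝ)..1, t * (1-t) * g t) * deriv (deriv f) x := by ring_nf; ring_nf at key2'; linarith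
  have : -(∫ t in (0:ℝ)..1, t * (1-t) * g t) * (deriv (deriv f) x / deriv f x ^ 2)
      = (-(∫ t in (0:ℝ)..1, t * (1-t) * g t) * deriv (deriv f) x) / deriv f x ^ 2 := by ring
  rw [this, ← main, eq_div_iff hd2]
  ring

/-- The characteristic function of the g-weighted integral mean of the second kind
with integrality function f satisfies Q_M(f(x)) = -μ(g) · f''(x)/f'(x)². -/
theorem stmt17 (I : Set ℝ) (hIo : IsOpen I) (hIc : I.OrdConnected) (hne : I.Nonempty)
    (f : ℝ → ℝ)
    (hmono : StrictMonoOn f I ∨ StrictAntiOn f I)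
    (hsm : ContDiffOn ℝ (⊤ : ℕ∞) f I)
    (hd : ∀ x ∈ I, deriv f x ≠ 0)
    (him : f '' I = Set.Ioi 0)
    (g : ℝ → ℝ) (hg : IsSymmDist g)
    (M : ℝ → ℝ → ℝ) (hM : IsMean M)
    (heq : ∀ x ∈ I, ∀ y ∈ I,
      M (f x) (f y) = ∫ t in (0:ℝ)..1, f (t * x + (1 - t) * y) * g t) :
    ∀ x ∈ I,
      charFun M (f x) =
        -(∫ t in (0:ℝ)..1, t * (1 - t) * g t) *
          (deriv (deriv f) x / (deriv f x) ^ 2) := by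
  intro x hx
  exact stmt17' I hIo hIc hne f hmono hsm hd him g hg.1 hg.2.1 hg.2.2.1 hg.2.2.2 M hM.1 heq x hx
end

section
/- Let M be a mean, let f : (0,∞) → (0,∞) be a strictly monotonic C^∞ function with nowhere-vanishing derivative, and let F be a mean satisfying f(F(x,y)) = M(f(x), f(y)) for all x,y > 0 (i.e. F = f⁻¹ ∘ M ∘ f is the M-mean associated with f). Then the characteristic function of F satisfies Q_F(x) = f''(x)/(4 f'(x)) + f'(x) · Q_M(f(x)) for all x > 0. -/
open Real Set MeasureTheory

lemma mean_diag (M : ℝ → ℝ → ℝ) (hM : IsMean M) {x : ℝ} (hx : 0 < x) : M x x = x := by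
  obtain ⟨h1, h2⟩ := hM.2.2.1 x x hx hx
  simp only [min_self, max_self] at h1 h2
  linarith

lemma quad_open : IsOpen {p : ℝ × ℝ | 0 < p.1 ∧ 0 < p.2} :=
  (isOpen_lt continuous_const continuous_fst).inter (isOpen_lt continuous_const continuous_snd)

lemma mean_slice_smooth (M : ℝ → ℝ → ℝ) (hM : IsMean M) {y : ℝ} (hy : 0 < y) :
    ContDiffOn ℝ (⊤ : ℕ∞) (fun s => M s y) (Set.Ioi 0) := by
  have : ContDiff ℝ (⊤ : ℕ∞) (fun s : ℝ => (s, y)) := contDiff_id.prodMk contDiff_const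
  exact hM.1.comp this.contDiffOn (fun s hs => ⟨hs, hy⟩)

lemma mean_slice_deriv_half (M : ℝ → ℝ → ℝ) (hM : IsMean M) {x : ℝ} (hx : 0 < x) :
    deriv (fun s => M s x) x = 1 / 2 := by
  have hmem : ((x, x) : ℝ × ℝ) ∈ {p : ℝ × ℝ | 0 < p.1 ∧ 0 < p.2} := ⟨hx, hx⟩
  have hdiff : DifferentiableAt ℝ (fun p : ℝ × ℝ => M p.1 p.2) (x, x) :=
    (hM.1.contDiffAt (quad_open.mem_nhds hmem)).differentiableAt (by simp)
  set L := fderiv ℝ (fun p : ℝ × ℝ => M p.1 p.2) (x, x) with hL_def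
  have hL := hdiff.hasFDerivAt
  have h1 : HasDerivAt (fun s => M s x) (L (1, 0)) x := by
    have h : HasDerivAt (fun s : ℝ => (s, x)) ((1 : ℝ), (0 : ℝ)) x :=
      (hasDerivAt_id x).prodMk (hasDerivAt_const x x)
    have h' : HasDerivAt ((fun p : ℝ × ℝ => M p.1 p.2) ∘ (fun s : ℝ => (s, x))) (L (1, 0)) x :=
      HasFDerivAt.comp_hasDerivAt x (by simpa using hL) h
    exact h'
  have h2 : HasDerivAt (fun s => M x s) (L (0, 1)) x := by
    have h : HasDerivAt (fun s : ℝ => (x, s)) ((0 : ℝ), (1 : ℝ)) x :=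
      (hasDerivAt_const x x).prodMk (hasDerivAt_id x)
    have h' : HasDerivAt ((fun p : ℝ × ℝ => M p.1 p.2) ∘ (fun s : ℝ => (x, s))) (L (0, 1)) x :=
      HasFDerivAt.comp_hasDerivAt x (by simpa using hL) h
    exact h'
  have hdg : HasDerivAt (fun s => M s s) (L (1, 1)) x := by
    have h : HasDerivAt (fun s : ℝ => (s, s)) ((1 : ℝ), (1 : ℝ)) x :=
      (hasDerivAt_id x).prodMk (hasDerivAt_id x)
    have h' : HasDerivAt ((fun p : ℝ × ℝ => M p.1 p.2) ∘ (fun s : ℝ => (s, s))) (L (1, 1)) x :=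
      HasFDerivAt.comp_hasDerivAt x (by simpa using hL) h
    exact h'
  have hdiag : (id : ℝ → ℝ) =ᶠ[nhds x] (fun s => M s s) := by
    filter_upwards [isOpen_Ioi.mem_nhds hx] with s hs
    exact (mean_diag M hM hs).symm
  have h11 : L (1, 1) = 1 := by
    have h := hdg.congr_of_eventuallyEq hdiag
    exact h.unique (hasDerivAt_id x)
  have hsymL : L (1, 0) = L (0, 1) := by
    have hev : (fun s => M x s) =ᶠ[nhds x] (fun s => M s x) := by
      filter_upwards [isOpen_Ioi.mem_nhds hx] with s hs
      exact (hM.2.2.2 s x hs hx).symm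
    have h1' := h1.congr_of_eventuallyEq hev
    exact h1'.unique h2
  have hadd : L (1, 1) = L (1, 0) + L (0, 1) := by
    have : ((1 : ℝ), (1 : ℝ)) = (1, 0) + (0, 1) := by simp
    rw [this, map_add]
  rw [h1.deriv]
  rw [hsymL] at hadd
  linarith [hadd, h11]

lemma smooth_diffAt {φ : ℝ → ℝ} (h : ContDiffOn ℝ (⊤ : ℕ∞) φ (Set.Ioi 0)) {x : ℝ} (hx : 0 < x) :
    DifferentiableAt ℝ φ x :=
  (h.contDiffAt (isOpen_Ioi.mem_nhds hx)).differentiableAt (by simp)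

lemma smooth_deriv {φ : ℝ → ℝ} (h : ContDiffOn ℝ (⊤ : ℕ∞) φ (Set.Ioi 0)) :
    ContDiffOn ℝ (⊤ : ℕ∞) (deriv φ) (Set.Ioi 0) :=
  h.deriv_of_isOpen isOpen_Ioi (by simp)

lemma charFun_eq' (M : ℝ → ℝ → ℝ) (x : ℝ) :
    charFun M x = deriv (deriv (fun s => M s x)) x := by
  rw [_root_.charFun, show (2 : ℕ) = 1 + 1 from rfl, iteratedDeriv_succ, iteratedDeriv_one]


/-- The characteristic function of the M-mean F = f⁻¹ ∘ M ∘ f is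
f''/(4 f') + f' · (Q_M ∘ f). -/
theorem stmt18 (M : ℝ → ℝ → ℝ) (hM : IsMean M)
    (f : ℝ → ℝ) (hpos : ∀ x : ℝ, 0 < x → 0 < f x)
    (hmono : StrictMonoOn f (Set.Ioi 0) ∨ StrictAntiOn f (Set.Ioi 0))
    (hsm : ContDiffOn ℝ (⊤ : ℕ∞) f (Set.Ioi 0))
    (hd : ∀ x : ℝ, 0 < x → deriv f x ≠ 0)
    (F : ℝ → ℝ → ℝ) (hF : IsMean F)
    (heq : ∀ x y : ℝ, 0 < x → 0 < y → f (F x y) = M (f x) (f y)) :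
    ∀ x : ℝ, 0 < x →
      charFun F x =
        deriv (deriv f) x / (4 * deriv f x) + deriv f x * charFun M (f x) := by
  intro x hx
  have hfx : 0 < f x := hpos x hx
  set g := fun s => F s x with hg_def
  set m := fun t => M t (f x) with hm_def
  have hg_smooth : ContDiffOn ℝ (⊤ : ℕ∞) g (Set.Ioi 0) := mean_slice_smooth F hF hx
  have hm_smooth : ContDiffOn ℝ (⊤ : ℕ∞) m (Set.Ioi 0) := mean_slice_smooth M hM hfx
  have hgpos : ∀ s : ℝ, 0 < s → 0 < g s := fun s hs => hF.2.1 s x hs hx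
  have hgx : g x = x := mean_diag F hF hx
  have hgd : deriv g x = 1 / 2 := mean_slice_deriv_half F hF hx
  have hmd : deriv m (f x) = 1 / 2 := mean_slice_deriv_half M hM hfx
  -- first derivative identity on Ioi 0
  have key1 : ∀ s ∈ Set.Ioi (0:ℝ), deriv f (g s) * deriv g s = deriv m (f s) * deriv f s := by
    intro s hs
    have hs' : (0:ℝ) < s := hs
    have hA : HasDerivAt (fun u => f (g u)) (deriv f (g s) * deriv g s) s :=
      (smooth_diffAt hsm (hgpos s hs')).hasDerivAt.comp s (smooth_diffAt hg_smooth hs').hasDerivAt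
    have hB : HasDerivAt (fun u => m (f u)) (deriv m (f s) * deriv f s) s :=
      (smooth_diffAt hm_smooth (hpos s hs')).hasDerivAt.comp s (smooth_diffAt hsm hs').hasDerivAt
    have hev : (fun u => f (g u)) =ᶠ[nhds s] (fun u => m (f u)) := by
      filter_upwards [isOpen_Ioi.mem_nhds hs'] with u hu
      exact heq u x hu hx
    have hA' := hA.congr_of_eventuallyEq hev.symm
    exact hA'.unique hB
  -- second derivative at x
  have hdf : DifferentiableAt ℝ (deriv f) x := smooth_diffAt (smooth_deriv hsm) hx
  have hdg : DifferentiableAt ℝ (deriv g) x := smooth_diffAt (smooth_deriv hg_smooth) hx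
  have hdm : DifferentiableAt ℝ (deriv m) (f x) := smooth_diffAt (smooth_deriv hm_smooth) hfx
  have hgdiff : DifferentiableAt ℝ g x := smooth_diffAt hg_smooth hx
  have hfdiff : DifferentiableAt ℝ f x := smooth_diffAt hsm hx
  -- P hasDerivAt
  have hP1 : HasDerivAt (fun s => deriv f (g s)) (deriv (deriv f) x * deriv g x) x := by
    have := (show HasDerivAt (deriv f) (deriv (deriv f) x) (g x) by rw [hgx]; exact hdf.hasDerivAt).comp x hgdiff.hasDerivAt
    exact this
  have hP : HasDerivAt (fun s => deriv f (g s) * deriv g s)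
      (deriv (deriv f) x * deriv g x * deriv g x + deriv f (g x) * deriv (deriv g) x) x :=
    hP1.mul hdg.hasDerivAt
  have hQ1 : HasDerivAt (fun s => deriv m (f s)) (deriv (deriv m) (f x) * deriv f x) x :=
    hdm.hasDerivAt.comp x hfdiff.hasDerivAt
  have hQ : HasDerivAt (fun s => deriv m (f s) * deriv f s)
      (deriv (deriv m) (f x) * deriv f x * deriv f x + deriv m (f x) * deriv (deriv f) x) x :=
    hQ1.mul hdf.hasDerivAt
  have hPQ : HasDerivAt (fun s => deriv f (g s) * deriv g s)
      (deriv (deriv m) (f x) * deriv f x * deriv f x + deriv m (f x) * deriv (deriv f) x) x := by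
    refine hQ.congr_of_eventuallyEq ?_
    filter_upwards [isOpen_Ioi.mem_nhds hx] with s hs
    exact key1 s hs
  have main : deriv (deriv f) x * deriv g x * deriv g x + deriv f (g x) * deriv (deriv g) x =
      deriv (deriv m) (f x) * deriv f x * deriv f x + deriv m (f x) * deriv (deriv f) x :=
    hP.unique hPQ
  rw [hgx, hgd, hmd] at main
  rw [charFun_eq', charFun_eq']
  have hfd := hd x hx
  have hgg : deriv (deriv g) x = deriv (deriv (fun s => F s x)) x := rfl
  have hmm : deriv (deriv m) (f x) = deriv (deriv (fun s => M s (f x))) (f x) := rfl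
  rw [← hgg, ← hmm]
  field_simp at main ⊢
  nlinarith [main, sq_nonneg (deriv f x)]
end
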